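/- arXiv:2104.10459 — 2 statements merged into one kernel-verified Lean document; each statement's English description precedes it below -/
import Mathlib

section
/- For real matrices A ∈ ℝ^{m×n} (von Neumann trace inequality): trace(Aᵀ B) ≤ Σᵢ σᵢ(A)·σᵢ(B), where σ₁ ≥ σ₂ ≥ ... are the singular values of A and B in descending order. -/
/-!
Put `U = UAᵀ * UB` and `V = VAᵀ * VB`; both are orthogonal, and cycling the trace gives
`tr (Aᵀ * B) = ∑ s t, σA s * σB t * U s t * V s t` over `s, t < min m n`. Since the rows and
columns of `U` and `V` are unit vectors, `2 * U s t * V s t ≤ U s t ^ 2 + V s t ^ 2` shows that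
every leading `p × q` block of the entrywise product of `U` and `V` sums to at most `min p q`,
which is the same block sum for the identity matrix. Abel summation in each index against the
nonnegative decreasing sequences `σA` and `σB` turns these block bounds into
`tr (Aᵀ * B) ≤ ∑ s, σA s * σB s`.
-/

open Matrix BigOperators

/-- The rectangular diagonal matrix with diagonal entries `σ 0, σ 1, ...`. -/
def rectDiag (m n : ℕ) (σ : ℕ → ℝ) : Matrix (Fin m) (Fin n) ℝ :=
  fun i j => if (i : ℕ) = (j : ℕ) then σ i else 0

open Finset

theorem Finset.range_filter_lt (p q : ℕ) : (range q).filter (· < p) = range (min p q) := by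
  ext; simp only [mem_filter, mem_range]; omega

section OrderedRing

variable {R : Type*} [CommRing R] [LinearOrder R] [IsStrictOrderedRing R]

theorem sum_range_mul_le_sum_range_mul_of_antitone {a f g : ℕ → R} {N : ℕ} (ha : Antitone a)
    (haN : 0 ≤ a N) (h : ∀ p ≤ N, ∑ j ∈ range p, f j ≤ ∑ j ∈ range p, g j) :
    ∑ j ∈ range N, a j * f j ≤ ∑ j ∈ range N, a j * g j := by
  suffices key : ∀ p ≤ N, a p * ∑ j ∈ range p, (g j - f j) ≤ ∑ j ∈ range p, a j * (g j - f j) by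
    have hpos : 0 ≤ a N * ∑ j ∈ range N, (g j - f j) :=
      mul_nonneg haN (by simpa only [sum_sub_distrib, sub_nonneg] using h N le_rfl)
    have := key N le_rfl
    simp only [mul_sub, sum_sub_distrib] at this hpos
    linarith
  intro p hp
  induction p with
  | zero => simp
  | succ p ih =>
    have hsum : 0 ≤ ∑ j ∈ range (p + 1), (g j - f j) := by
      simpa only [sum_sub_distrib, sub_nonneg] using h (p + 1) hp
    have hmono := mul_le_mul_of_nonneg_right (ha p.le_succ) hsum
    simp only [sum_range_succ] at hmono ⊢
    linarith [ih (by omega)]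

theorem sum_range_sum_range_mul_le {a b : ℕ → R} {w : ℕ → ℕ → R} {N : ℕ} (ha : Antitone a)
    (hb : Antitone b) (haN : 0 ≤ a N) (hbN : 0 ≤ b N)
    (hw : ∀ p ≤ N, ∀ q ≤ N, ∑ i ∈ range p, ∑ j ∈ range q, w i j ≤ min p q) :
    ∑ i ∈ range N, ∑ j ∈ range N, a i * b j * w i j ≤ ∑ i ∈ range N, a i * b i := by
  have hrow : ∀ p ≤ N, ∑ i ∈ range p, ∑ j ∈ range N, b j * w i j ≤ ∑ i ∈ range p, b i := by
    intro p hp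
    calc ∑ i ∈ range p, ∑ j ∈ range N, b j * w i j
        = ∑ j ∈ range N, b j * ∑ i ∈ range p, w i j := by
          rw [sum_comm]; simp only [mul_sum]
      _ ≤ ∑ j ∈ range N, b j * if j < p then 1 else 0 := by
          refine sum_range_mul_le_sum_range_mul_of_antitone hb hbN fun q hq => ?_
          rw [sum_comm, sum_boole, range_filter_lt]
          simpa using hw p hp q hq
      _ = ∑ i ∈ range p, b i := by
          have hrange : range p = (range N).filter (· < p) := by
            rw [range_filter_lt, min_eq_left hp]
          simp [hrange, sum_filter]
  calc ∑ i ∈ range N, ∑ j ∈ range N, a i * b j * w i j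
      = ∑ i ∈ range N, a i * ∑ j ∈ range N, b j * w i j := by simp only [mul_sum, mul_assoc]
    _ ≤ ∑ i ∈ range N, a i * b i := sum_range_mul_le_sum_range_mul_of_antitone ha haN hrow

theorem sum_sum_sq_le_min_card {ι κ : Type*} {s : Finset ι} {t : Finset κ} {u : ι → κ → R}
    (hrow : ∀ i ∈ s, ∑ j ∈ t, u i j ^ 2 ≤ 1) (hcol : ∀ j ∈ t, ∑ i ∈ s, u i j ^ 2 ≤ 1) :
    ∑ i ∈ s, ∑ j ∈ t, u i j ^ 2 ≤ min #s #t := by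
  rw [Nat.cast_min]
  refine le_min ?_ ?_
  · simpa using sum_le_card_nsmul s _ 1 hrow
  · rw [sum_comm]
    simpa using sum_le_card_nsmul t _ 1 hcol

theorem sum_sum_mul_le_min_card {ι κ : Type*} {s : Finset ι} {t : Finset κ} {u v : ι → κ → R}
    (hu_row : ∀ i ∈ s, ∑ j ∈ t, u i j ^ 2 ≤ 1) (hu_col : ∀ j ∈ t, ∑ i ∈ s, u i j ^ 2 ≤ 1)
    (hv_row : ∀ i ∈ s, ∑ j ∈ t, v i j ^ 2 ≤ 1) (hv_col : ∀ j ∈ t, ∑ i ∈ s, v i j ^ 2 ≤ 1) :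
    ∑ i ∈ s, ∑ j ∈ t, u i j * v i j ≤ min #s #t := by
  have hamgm : 2 * ∑ i ∈ s, ∑ j ∈ t, u i j * v i j
      ≤ ∑ i ∈ s, ∑ j ∈ t, u i j ^ 2 + ∑ i ∈ s, ∑ j ∈ t, v i j ^ 2 := by
    simp only [mul_sum, ← sum_add_distrib]
    gcongr with i _ j _
    linarith [two_mul_le_add_sq (u i j) (v i j)]
  linarith [sum_sum_sq_le_min_card hu_row hu_col, sum_sum_sq_le_min_card hv_row hv_col]

end OrderedRing

namespace Matrix

variable {R : Type*} {m n : ℕ}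

-- Zero outside the matrix, so that matrices of any size can be read along the same
-- natural-number indices as the sequences `σ`.
def natEntry [Zero R] (M : Matrix (Fin m) (Fin n) R) (i j : ℕ) : R :=
  if h : i < m ∧ j < n then M ⟨i, h.1⟩ ⟨j, h.2⟩ else 0

@[simp]
theorem natEntry_val [Zero R] (M : Matrix (Fin m) (Fin n) R) (i : Fin m) (j : Fin n) :
    natEntry M i j = M i j := by
  simp [natEntry]

theorem natEntry_transpose [Zero R] (M : Matrix (Fin m) (Fin n) R) (i j : ℕ) :
    natEntry Mᵀ i j = natEntry M j i := by
  unfold natEntry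
  split_ifs <;> first | rfl | tauto

theorem sum_range_natEntry_sq_le_one_of_mul_transpose_self [CommRing R] [LinearOrder R]
    [IsStrictOrderedRing R] {M : Matrix (Fin m) (Fin n) R} (hM : M * Mᵀ = 1) (i : ℕ) {q : ℕ}
    (hq : q ≤ n) :
    ∑ j ∈ range q, natEntry M i j ^ 2 ≤ 1 := by
  calc ∑ j ∈ range q, natEntry M i j ^ 2 ≤ ∑ j ∈ range n, natEntry M i j ^ 2 :=
        sum_le_sum_of_subset_of_nonneg (range_subset_range.2 hq) fun _ _ _ => sq_nonneg _
    _ ≤ 1 := by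
      rw [← Fin.sum_univ_eq_sum_range (fun j => natEntry M i j ^ 2)]
      by_cases hi : i < m
      · have hii := congrFun (congrFun hM ⟨i, hi⟩) ⟨i, hi⟩
        simp [mul_apply] at hii
        simp [natEntry, hi, sq, hii]
      · simp [natEntry, hi]

theorem sum_range_natEntry_sq_le_one_of_transpose_mul_self [CommRing R] [LinearOrder R]
    [IsStrictOrderedRing R] {M : Matrix (Fin m) (Fin n) R} (hM : Mᵀ * M = 1) (j : ℕ) {r : ℕ}
    (hr : r ≤ m) : ∑ i ∈ range r, natEntry M i j ^ 2 ≤ 1 := by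
  simpa [natEntry_transpose] using
    sum_range_natEntry_sq_le_one_of_mul_transpose_self (M := Mᵀ) (by rwa [transpose_transpose]) j hr

theorem transpose_mul_mem_orthogonalGroup [CommRing R] {ι : Type*} [Fintype ι] [DecidableEq ι]
    {P Q : Matrix ι ι R} (hP : Pᵀ * P = 1) (hQ : Qᵀ * Q = 1) : Pᵀ * Q ∈ orthogonalGroup ι R := by
  rw [mem_orthogonalGroup_iff', transpose_mul, transpose_transpose, Matrix.mul_assoc,
    ← Matrix.mul_assoc P, mul_eq_one_comm.1 hP, Matrix.one_mul, hQ]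

theorem sum_range_sum_range_natEntry_mul_le [CommRing R] [LinearOrder R] [IsStrictOrderedRing R]
    {U : Matrix (Fin m) (Fin m) R} {V : Matrix (Fin n) (Fin n) R}
    (hU : U ∈ orthogonalGroup (Fin m) R) (hV : V ∈ orthogonalGroup (Fin n) R) {p q : ℕ}
    (hp : p ≤ min m n) (hq : q ≤ min m n) :
    ∑ i ∈ range p, ∑ j ∈ range q, natEntry U i j * natEntry V i j ≤ min p q := by
  simpa using sum_sum_mul_le_min_card (s := range p) (t := range q)
    (fun i _ => sum_range_natEntry_sq_le_one_of_mul_transpose_self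
      ((mem_orthogonalGroup_iff _ _).1 hU) i (hq.trans (min_le_left _ _)))
    (fun j _ => sum_range_natEntry_sq_le_one_of_transpose_mul_self
      ((mem_orthogonalGroup_iff' _ _).1 hU) j (hp.trans (min_le_left _ _)))
    (fun i _ => sum_range_natEntry_sq_le_one_of_mul_transpose_self
      ((mem_orthogonalGroup_iff _ _).1 hV) i (hq.trans (min_le_right _ _)))
    (fun j _ => sum_range_natEntry_sq_le_one_of_transpose_mul_self
      ((mem_orthogonalGroup_iff' _ _).1 hV) j (hp.trans (min_le_right _ _)))

theorem trace_transpose_mul_eq_sum_sum {R ι κ : Type*} [Fintype ι] [Fintype κ]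
    [NonUnitalNonAssocSemiring R] (M N : Matrix ι κ R) :
    (Mᵀ * N).trace = ∑ i, ∑ j, M i j * N i j := by
  simp only [trace, diag, mul_apply, transpose_apply]
  exact sum_comm

theorem sum_sum_rectDiag_mul (σ : ℕ → ℝ) (X : Matrix (Fin m) (Fin n) ℝ) :
    ∑ i, ∑ j, rectDiag m n σ i j * X i j = ∑ s ∈ range (min m n), σ s * natEntry X s s := by
  calc ∑ i, ∑ j, rectDiag m n σ i j * X i j
      = ∑ i ∈ range m, ∑ j ∈ range n, if i = j then σ i * natEntry X i j else 0 := by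
        rw [← Fin.sum_univ_eq_sum_range]
        refine sum_congr rfl fun i _ => ?_
        rw [← Fin.sum_univ_eq_sum_range]
        refine sum_congr rfl fun j _ => ?_
        simp [rectDiag]
    _ = ∑ i ∈ range m, if i < n then σ i * natEntry X i i else 0 := by simp [sum_ite_eq]
    _ = ∑ s ∈ range (min m n), σ s * natEntry X s s := by
        rw [← sum_filter, range_filter_lt, min_comm]

theorem natEntry_mul_rectDiag_mul_transpose (U : Matrix (Fin m) (Fin m) ℝ) (σ : ℕ → ℝ)
    (V : Matrix (Fin n) (Fin n) ℝ) (i j : ℕ) :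
    natEntry (U * rectDiag m n σ * Vᵀ) i j
      = ∑ t ∈ range (min m n), σ t * (natEntry U i t * natEntry V j t) := by
  by_cases h : i < m ∧ j < n
  · have hentry : (U * rectDiag m n σ * Vᵀ) ⟨i, h.1⟩ ⟨j, h.2⟩
        = ∑ l, ∑ r, rectDiag m n σ l r * of (fun l r => U ⟨i, h.1⟩ l * V ⟨j, h.2⟩ r) l r := by
      simp only [mul_apply, transpose_apply, of_apply, sum_mul]
      rw [sum_comm]
      exact sum_congr rfl fun l _ => sum_congr rfl fun r _ => by ring
    rw [natEntry, dif_pos h, hentry, sum_sum_rectDiag_mul]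
    refine sum_congr rfl fun t _ => ?_
    by_cases ht : t < m ∧ t < n
    · simp [natEntry, h, ht]
    · simp [natEntry, ht]
      tauto
  · have hzero (t : ℕ) : natEntry U i t * natEntry V j t = 0 := by
      rcases not_and_or.1 h with hi | hj
      · simp [natEntry, hi]
      · simp [natEntry, hj]
    rw [natEntry, dif_neg h]
    simp only [hzero, mul_zero, sum_const_zero]

theorem trace_transpose_mul_eq_sum_natEntry (UA UB : Matrix (Fin m) (Fin m) ℝ)
    (VA VB : Matrix (Fin n) (Fin n) ℝ) (σA σB : ℕ → ℝ) :
    ((UA * rectDiag m n σA * VAᵀ)ᵀ * (UB * rectDiag m n σB * VBᵀ)).trace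
      = ∑ s ∈ range (min m n), ∑ t ∈ range (min m n),
          σA s * σB t * (natEntry (UAᵀ * UB) s t * natEntry (VAᵀ * VB) s t) := by
  have hcycle : ((UA * rectDiag m n σA * VAᵀ)ᵀ * (UB * rectDiag m n σB * VBᵀ)).trace
      = ((rectDiag m n σA)ᵀ * (UAᵀ * UB * rectDiag m n σB * (VAᵀ * VB)ᵀ)).trace := by
    simp only [transpose_mul, transpose_transpose, Matrix.mul_assoc]
    rw [trace_mul_comm VA]
    simp only [Matrix.mul_assoc]
  rw [hcycle, trace_transpose_mul_eq_sum_sum, sum_sum_rectDiag_mul]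
  refine sum_congr rfl fun s _ => ?_
  simp only [natEntry_mul_rectDiag_mul_transpose, mul_sum, mul_assoc]

end Matrix

/-- Von Neumann trace inequality: given singular value decompositions of `A` and `B`
with singular values in descending order, `trace(Aᵀ B) ≤ ∑ i, σᵢ(A) σᵢ(B)`. -/
theorem von_neumann_trace_inequality {m n : ℕ}
    (A B : Matrix (Fin m) (Fin n) ℝ)
    (UA UB : Matrix (Fin m) (Fin m) ℝ) (VA VB : Matrix (Fin n) (Fin n) ℝ)
    (hUA : UAᵀ * UA = 1) (hUB : UBᵀ * UB = 1)
    (hVA : VAᵀ * VA = 1) (hVB : VBᵀ * VB = 1)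
    (σA σB : ℕ → ℝ)
    (hσA0 : ∀ i, 0 ≤ σA i) (hσB0 : ∀ i, 0 ≤ σB i)
    (hσAdec : ∀ i j, i ≤ j → σA j ≤ σA i) (hσBdec : ∀ i j, i ≤ j → σB j ≤ σB i)
    (hA : A = UA * rectDiag m n σA * VAᵀ) (hB : B = UB * rectDiag m n σB * VBᵀ) :
    (Aᵀ * B).trace ≤ ∑ i ∈ Finset.range (min m n), σA i * σB i := by
  rw [hA, hB, trace_transpose_mul_eq_sum_natEntry]
  exact sum_range_sum_range_mul_le hσAdec hσBdec (hσA0 _) (hσB0 _) fun p hp q hq =>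
    sum_range_sum_range_natEntry_mul_le (transpose_mul_mem_orthogonalGroup hUA hUB)
      (transpose_mul_mem_orthogonalGroup hVA hVB) hp hq
end

section
/- Let Z ∈ ℝ^{r×r} be a matrix all of whose entries satisfy Σᵢ |zᵢⱼ| ≤ 1 for each column j and Σⱼ |zᵢⱼ| ≤ 1 for each row i, and let (aᵢ) and (bⱼ) be nonincreasing sequences of nonnegative reals. Then Σᵢⱼ zᵢⱼ aᵢ bⱼ ≤ Σᵢ aᵢ bᵢ. -/
/-!
Abel summation: for `a` nonnegative and antitone, `∑ aᵢ cᵢ ≤ ∑ aᵢ dᵢ` as soon as every initial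
partial sum of `c` is at most that of `d`. Applied in `a`, the inequality reduces to
`∑_{i ≤ k} (Z b)ᵢ ≤ ∑_{i ≤ k} bᵢ`; applied again in `b`, to `∑_{i ≤ k, j ≤ l} zᵢⱼ ≤ min(k, l) + 1`,
which the row sums give when `k ≤ l` and the column sums otherwise.
-/

open Finset
open scoped Matrix

namespace Fin

variable {R : Type*} [CommRing R] [PartialOrder R] [IsOrderedRing R]

theorem sum_mul_nonneg_of_antitone_of_partialSums_nonneg {n : ℕ} {a e : Fin n → R}
    (ha0 : ∀ i, 0 ≤ a i) (ha : Antitone a) (he : ∀ k, 0 ≤ ∑ i ∈ Iic k, e i) :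
    0 ≤ ∑ i, a i * e i := by
  induction n with
  | zero => simp
  | succ n ih =>
    -- Subtracting the last value of `a` kills the last summand and keeps `a` antitone.
    set a' : Fin n → R := fun i => a i.castSucc - a (last n)
    have ha' : 0 ≤ ∑ i, a' i * e i.castSucc :=
      ih (fun i => sub_nonneg.2 (ha (le_last _))) (fun i j hij => sub_le_sub_right (ha hij) _)
        fun k => by simpa [← map_castSuccEmb_Iic] using he k.castSucc
    have htotal : 0 ≤ ∑ i, e i := by simpa only [← Iic_top] using he ⊤
    calc 0 ≤ ∑ i, a' i * e i.castSucc + a (last n) * ∑ i, e i :=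
          add_nonneg ha' (mul_nonneg (ha0 _) htotal)
      _ = ∑ i, a i * e i := by
          simp only [a', sub_mul, sum_sub_distrib, ← mul_sum]
          rw [sum_univ_castSucc e, sum_univ_castSucc fun i => a i * e i]
          ring

theorem sum_mul_le_sum_mul_of_antitone_of_partialSums_le {n : ℕ} {a c d : Fin n → R}
    (ha0 : ∀ i, 0 ≤ a i) (ha : Antitone a) (h : ∀ k, ∑ i ∈ Iic k, c i ≤ ∑ i ∈ Iic k, d i) :
    ∑ i, a i * c i ≤ ∑ i, a i * d i := by
  have := sum_mul_nonneg_of_antitone_of_partialSums_nonneg (e := d - c) ha0 ha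
    fun k => by simpa [sum_sub_distrib] using h k
  simpa [mul_sub, sum_sub_distrib] using this

end Fin

namespace Matrix

variable {R : Type*} [CommRing R] [LinearOrder R] [IsStrictOrderedRing R]

theorem sum_sum_le_card_left {m n : Type*} [Fintype n] {Z : Matrix m n R}
    (hrow : ∀ i, ∑ j, |Z i j| ≤ 1) (s : Finset m) (t : Finset n) : ∑ i ∈ s, ∑ j ∈ t, Z i j ≤ #s := by
  calc ∑ i ∈ s, ∑ j ∈ t, Z i j ≤ ∑ i ∈ s, ∑ j, |Z i j| := by
        gcongr with i
        exact (sum_le_sum fun j _ => le_abs_self _).trans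
          (sum_le_sum_of_subset_of_nonneg (subset_univ t) fun j _ _ => abs_nonneg _)
    _ ≤ ∑ i ∈ s, 1 := sum_le_sum fun i _ => hrow i
    _ = #s := by simp

theorem sum_sum_le_card_right {m n : Type*} [Fintype m] {Z : Matrix m n R}
    (hcol : ∀ j, ∑ i, |Z i j| ≤ 1) (s : Finset m) (t : Finset n) :
    ∑ i ∈ s, ∑ j ∈ t, Z i j ≤ #t :=
  sum_comm.trans_le (sum_sum_le_card_left (Z := Zᵀ) hcol t s)

theorem sum_Iic_mulVec_le {r : ℕ} {Z : Matrix (Fin r) (Fin r) R} {b : Fin r → R}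
    (hcol : ∀ j, ∑ i, |Z i j| ≤ 1) (hrow : ∀ i, ∑ j, |Z i j| ≤ 1)
    (hb0 : ∀ i, 0 ≤ b i) (hb : Antitone b) (k : Fin r) :
    ∑ i ∈ Iic k, (Z *ᵥ b) i ≤ ∑ i ∈ Iic k, b i := by
  have hblock (l : Fin r) :
      ∑ j ∈ Iic l, ∑ i ∈ Iic k, Z i j ≤ ∑ j ∈ Iic l, if j ≤ k then (1 : R) else 0 := by
    have hcard : ∑ j ∈ Iic l, (if j ≤ k then (1 : R) else 0) = min #(Iic l) #(Iic k) := by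
      rw [sum_boole, ← Monotone.map_min fun _ _ h => card_le_card (Iic_subset_Iic.2 h)]
      congr 2; ext j; simp
    rw [hcard, Nat.cast_min, sum_comm]
    exact le_min (sum_sum_le_card_right hcol _ _) (sum_sum_le_card_left hrow _ _)
  calc ∑ i ∈ Iic k, (Z *ᵥ b) i = ∑ j, b j * ∑ i ∈ Iic k, Z i j := by
        simp only [mulVec, dotProduct, mul_sum]
        rw [sum_comm]
        exact sum_congr rfl fun j _ => sum_congr rfl fun i _ => mul_comm _ _
    _ ≤ ∑ j, b j * if j ≤ k then 1 else 0 :=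
        Fin.sum_mul_le_sum_mul_of_antitone_of_partialSums_le hb0 hb hblock
    _ = ∑ i ∈ Iic k, b i := by
        simp only [mul_ite, mul_one, mul_zero, ← sum_filter]
        congr 1; ext; simp

end Matrix

theorem doubly_substochastic_bilinear_le {r : ℕ}
    (Z : Matrix (Fin r) (Fin r) ℝ) (a b : Fin r → ℝ)
    (hcol : ∀ j, ∑ i, |Z i j| ≤ 1) (hrow : ∀ i, ∑ j, |Z i j| ≤ 1)
    (ha0 : ∀ i, 0 ≤ a i) (hb0 : ∀ i, 0 ≤ b i)
    (ha : Antitone a) (hb : Antitone b) :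
    ∑ i, ∑ j, Z i j * a i * b j ≤ ∑ i, a i * b i := by
  calc ∑ i, ∑ j, Z i j * a i * b j = ∑ i, a i * (Z *ᵥ b) i := by
        simp only [Matrix.mulVec, dotProduct, mul_sum]
        exact sum_congr rfl fun i _ => sum_congr rfl fun j _ => by ring
    _ ≤ ∑ i, a i * b i := Fin.sum_mul_le_sum_mul_of_antitone_of_partialSums_le ha0 ha
        (Matrix.sum_Iic_mulVec_le hcol hrow hb0 hb)
end
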